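/- There exists a constant C > 0 such that for every integer n ≥ 8 divisible by 4, the (1+1)-ENAS algorithm with multi-bit mutation and initial bound s = n/4 has expected runtime E[T] ≤ C·n on the UNIFORM problem. -/

import Mathlib

/-!
Runtime analysis of the (1+1)-ENAS algorithm on the UNIFORM problem.

A neural architecture is a triple `x = (n_A, n_B, n_C) ∈ ℕ³`.  With `a = n/2`,
`b = c = n/4`, `A = (1/2)·sin(2π/n)`, `B = π/n − A`, the fitness is
`f(x) = (1/π)·((n/2 + i(x))·A + (n/4 + j(x))·B)` where
`i(x) = min(n_B, b) + min(n_C, c)` and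
`j(x) = min(n_A, a) + min(n_B, b) − max(0, min(n_B − b, c − n_C))` (in ℤ).

One-bit mutation chooses uniformly among nine actions (three increments with
probability 1/9 each, three guarded decrements with probability 1/9 each and
six guarded modifications with probability 1/18 each); we realize this as the
push-forward of the uniform distribution on `Fin 18`.

The (1+1)-ENAS Markov chain starts from a state whose coordinates are
independent uniform on `{0,…,s}` and repeatedly applies mutation followed by
elitist selection.  The expected runtime `E[T]`, where `T` is the first `t`
with `f(x_t) = 1`, is expressed as `∑_{t≥0} P(T > t)`, where
`P(T > t) = ∑_x alive t x` and `alive t x` is the probability that the chain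
is in state `x` at time `t` without having reached fitness `1` at any time
`u ≤ t`.
-/

namespace ENAS

open scoped ENNReal

/-- A neural architecture: the numbers of A-, B- and C-type blocks. -/
abbrev State := ℕ × ℕ × ℕ

/-- The number of B/C-type blocks contributing to the fitness. -/
def iVal (n : ℕ) (x : State) : ℕ := min x.2.1 (n / 4) + min x.2.2 (n / 4)

/-- The number of A/B-type blocks contributing to the fitness minus the number of
B-type blocks negatively affecting the fitness (evaluated in `ℤ`). -/
def jVal (n : ℕ) (x : State) : ℤ :=
  min (x.1 : ℤ) ((n : ℤ) / 2) + min (x.2.1 : ℤ) ((n : ℤ) / 4) -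
    max 0 (min ((x.2.1 : ℤ) - (n : ℤ) / 4) ((n : ℤ) / 4 - (x.2.2 : ℤ)))

/-- The fitness (classification accuracy) of an architecture on `UNIFORM`. -/
noncomputable def fitness (n : ℕ) (x : State) : ℝ :=
  (1 / Real.pi) *
    (((n : ℝ) / 2 + (iVal n x : ℝ)) * ((1 / 2) * Real.sin (2 * Real.pi / n)) +
      ((n : ℝ) / 4 + (jVal n x : ℝ)) *
        (Real.pi / n - (1 / 2) * Real.sin (2 * Real.pi / n)))

/-- The elementary mutation actions.  Seeds `0`–`11` (two seeds per action) give the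
six probability-`1/9` actions (add A/B/C, remove A/B/C, where removal of an absent
block leaves the state unchanged, as does truncated subtraction on `ℕ`); seeds
`12`–`17` give the six probability-`1/18` modification actions. -/
def applyAction (k : Fin 18) (x : State) : State :=
  match (k : ℕ), x with
  | 0, (na, nb, nc) => (na + 1, nb, nc)
  | 1, (na, nb, nc) => (na + 1, nb, nc)
  | 2, (na, nb, nc) => (na, nb + 1, nc)
  | 3, (na, nb, nc) => (na, nb + 1, nc)
  | 4, (na, nb, nc) => (na, nb, nc + 1)
  | 5, (na, nb, nc) => (na, nb, nc + 1)
  | 6, (na, nb, nc) => (na - 1, nb, nc)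
  | 7, (na, nb, nc) => (na - 1, nb, nc)
  | 8, (na, nb, nc) => (na, nb - 1, nc)
  | 9, (na, nb, nc) => (na, nb - 1, nc)
  | 10, (na, nb, nc) => (na, nb, nc - 1)
  | 11, (na, nb, nc) => (na, nb, nc - 1)
  | 12, (na, nb, nc) => if 0 < na then (na - 1, nb + 1, nc) else (na, nb, nc)
  | 13, (na, nb, nc) => if 0 < na then (na - 1, nb, nc + 1) else (na, nb, nc)
  | 14, (na, nb, nc) => if 0 < nb then (na + 1, nb - 1, nc) else (na, nb, nc)
  | 15, (na, nb, nc) => if 0 < nb then (na, nb - 1, nc + 1) else (na, nb, nc)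
  | 16, (na, nb, nc) => if 0 < nc then (na + 1, nb, nc - 1) else (na, nb, nc)
  | _, (na, nb, nc) => if 0 < nc then (na, nb + 1, nc - 1) else (na, nb, nc)

/-- The one-bit mutation operator, as a probability distribution on offspring. -/
noncomputable def mutate (x : State) : PMF State :=
  (PMF.uniformOfFintype (Fin 18)).map (fun k => applyAction k x)

/-- Elitist selection: keep the offspring `y` iff `f(y) ≥ f(x)`. -/
noncomputable def select (n : ℕ) (x y : State) : State :=
  if fitness n x ≤ fitness n y then y else x

/-- One generation of the (1+1)-ENAS algorithm with one-bit mutation. -/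
noncomputable def stepOneBit (n : ℕ) (x : State) : PMF State :=
  (mutate x).map (select n x)

/-- The initial distribution: the three coordinates are independent, each uniform on
`{0, 1, …, s}`. -/
noncomputable def initDist (s : ℕ) : PMF State :=
  (PMF.uniformOfFintype (Fin (s + 1) × Fin (s + 1) × Fin (s + 1))).map
    (fun q => ((q.1 : ℕ), (q.2.1 : ℕ), (q.2.2 : ℕ)))

/-- `alive n step μ0 t x` is the probability that the chain with initial distribution
`μ0` and transition kernel `step` is in state `x` at time `t` and has not reached a
state of fitness `1` at any time `u ≤ t`; so `∑' x, alive n step μ0 t x = P(T > t)`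
where `T` is the first hitting time of `{f = 1}`. -/
noncomputable def alive (n : ℕ) (step : State → PMF State) (μ0 : PMF State) :
    ℕ → State → ℝ≥0∞
  | 0, x => if fitness n x = 1 then 0 else μ0 x
  | t + 1, x => if fitness n x = 1 then 0 else ∑' y, alive n step μ0 t y * step y x

/-- The expected runtime `E[T] = ∑_{t ≥ 0} P(T > t)` of the algorithm, where `T` is
the first `t ≥ 0` with `f(x_t) = 1`. -/
noncomputable def expectedRuntime (n : ℕ) (step : State → PMF State) (μ0 : PMF State) :
    ℝ≥0∞ :=
  ∑' t : ℕ, ∑' x : State, alive n step μ0 t x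


/-- Applying the elementary (one-bit) mutation operation `k` consecutive times,
each application independently selecting its action. -/
noncomputable def mutateIter : ℕ → State → PMF State
  | 0, x => PMF.pure x
  | k + 1, x => (mutate x).bind (mutateIter k)

/-- Multi-bit mutation: apply the elementary mutation `K` consecutive times, where
`K − 1` is Poisson-distributed with mean `1`, independently of everything else. -/
noncomputable def mutateMulti (x : State) : PMF State :=
  (ProbabilityTheory.poissonPMF 1).bind fun k => mutateIter (k + 1) x

/-- One generation of the (1+1)-ENAS algorithm with multi-bit mutation. -/
noncomputable def stepMultiBit (n : ℕ) (x : State) : PMF State :=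
  (mutateMulti x).map (select n x)

end ENAS

/-!
Write `n = 4 q`. The fitness equals `1 - (A · iDeficit + B · jDeficit) / π`, and `7 B ≤ A`, so
the potential `7 · iDeficit + jDeficit` never increases under elitist selection once
`iDeficit = 0`, and otherwise increases by at most `2 m - 7` after `m` elementary mutations.
With probability `e⁻¹ ≥ 1/3` a single mutation is applied, and it picks an improving action with
probability `2/18`, lowering the potential by `7` (by `1` once `iDeficit = 0`); the Poisson tail
of the possible increases is at most `1/6`. Hence the potential drifts down by `1/27` per
generation, and since it starts below `18 q`, additive drift gives `E[T] ≤ 27 · 18 q`.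
-/

open scoped ENNReal

set_option linter.deprecated false

namespace PMF

variable {α β : Type*}

theorem tsum_pure_mul (a : α) (g : α → ℝ≥0∞) : ∑' b, pure a b * g b = g a := by
  rw [tsum_eq_single a fun b hb => by simp [pure_apply, hb], pure_apply_self, one_mul]

theorem tsum_bind_mul (p : PMF α) (f : α → PMF β) (g : β → ℝ≥0∞) :
    ∑' b, p.bind f b * g b = ∑' a, p a * ∑' b, f a b * g b := by
  simp_rw [bind_apply, ← ENNReal.tsum_mul_right, ← ENNReal.tsum_mul_left, mul_assoc]
  exact ENNReal.tsum_comm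

theorem tsum_map_mul (p : PMF α) (f : α → β) (g : β → ℝ≥0∞) :
    ∑' b, p.map f b * g b = ∑' a, p a * g (f a) := by
  simp only [map, tsum_bind_mul, Function.comp_apply, tsum_pure_mul]

theorem tsum_mul_const (p : PMF α) (c : ℝ≥0∞) : ∑' a, p a * c = c := by
  rw [ENNReal.tsum_mul_right, tsum_coe, one_mul]

theorem tsum_mul_le_of_forall_mem_support {p : PMF α} {f : α → ℝ≥0∞} {c : ℝ≥0∞}
    (h : ∀ a ∈ p.support, f a ≤ c) : ∑' a, p a * f a ≤ c := by
  calc ∑' a, p a * f a ≤ ∑' a, p a * c := ENNReal.tsum_le_tsum fun a => by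
        by_cases ha : a ∈ p.support
        · exact mul_le_mul_right (h a ha) _
        · simp [(p.apply_eq_zero_iff a).2 ha]
    _ = c := tsum_mul_const p c

theorem tsum_mul_add_le_of_succ {p : PMF ℕ} {E r : ℕ → ℝ≥0∞} {v c δ : ℝ≥0∞}
    (hzero : E 0 + c ≤ v) (hsucc : ∀ k, E (k + 1) ≤ v + r k)
    (hpay : ∑' k, p (k + 1) * r k + δ ≤ p 0 * c) :
    ∑' k, p k * E k + δ ≤ v := by
  have hsum : p 0 + ∑' k, p (k + 1) = 1 := by
    rw [← tsum_eq_zero_add' ENNReal.summable, tsum_coe]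
  calc ∑' k, p k * E k + δ
      = p 0 * E 0 + ∑' k, p (k + 1) * E (k + 1) + δ := by
        rw [tsum_eq_zero_add' ENNReal.summable]
    _ ≤ p 0 * E 0 + ∑' k, p (k + 1) * (v + r k) + δ := by
        gcongr with k; exact hsucc k
    _ = p 0 * E 0 + (∑' k, p (k + 1)) * v + (∑' k, p (k + 1) * r k + δ) := by
        simp_rw [mul_add, ENNReal.tsum_add, ENNReal.tsum_mul_right]; ring
    _ ≤ p 0 * E 0 + (∑' k, p (k + 1)) * v + p 0 * c := by gcongr
    _ = p 0 * (E 0 + c) + (∑' k, p (k + 1)) * v := by ring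
    _ ≤ p 0 * v + (∑' k, p (k + 1)) * v := by gcongr
    _ = v := by rw [← add_mul, hsum, one_mul]

end PMF

namespace ProbabilityTheory

theorem poissonPMF_one_succ_mul (k : ℕ) : poissonPMF 1 (k + 1) * (k + 1) = poissonPMF 1 k := by
  rw [← poissonPMFReal_ofReal_eq_poissonPMF, ← poissonPMFReal_ofReal_eq_poissonPMF,
    ← ENNReal.ofReal_natCast, ← ENNReal.ofReal_one,
    ← ENNReal.ofReal_add (by positivity) zero_le_one,
    ← ENNReal.ofReal_mul (by unfold poissonPMFReal; positivity)]
  congr 1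
  simp only [poissonPMFReal, NNReal.coe_one, one_pow, Nat.factorial_succ, Nat.cast_mul]
  field_simp
  push_cast; ring

theorem one_third_le_poissonPMF_one_zero : (3 : ℝ≥0∞)⁻¹ ≤ poissonPMF 1 0 := by
  rw [← poissonPMFReal_ofReal_eq_poissonPMF, ← ENNReal.ofReal_ofNat,
    ← ENNReal.ofReal_inv_of_pos (by norm_num)]
  refine ENNReal.ofReal_le_ofReal ?_
  simp only [poissonPMFReal, NNReal.coe_one, pow_zero, Nat.factorial_zero, Nat.cast_one, div_one,
    mul_one, Real.exp_neg]
  exact inv_anti₀ (by positivity) (Real.exp_one_lt_d9.le.trans (by norm_num))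

theorem poissonPMF_one_add_three_mul (j : ℕ) :
    poissonPMF 1 (j + 3) * ((j + 1) * (j + 2) * (j + 3) : ℕ) = poissonPMF 1 j := by
  rw [← poissonPMF_one_succ_mul j, ← poissonPMF_one_succ_mul (j + 1),
    ← poissonPMF_one_succ_mul (j + 2)]
  push_cast; ring

/-- `2 (k + 2) - 7` vanishes for `k < 2` and is at most `(k + 1) k (k - 1) / 6`, a third
factorial moment, which `poissonPMF_one_add_three_mul` evaluates. -/
theorem tsum_poissonPMF_one_succ_mul_le :
    ∑' k, poissonPMF 1 (k + 1) * ((2 * (k + 2) - 7 : ℕ) : ℝ≥0∞) ≤ 6⁻¹ := by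
  rw [tsum_eq_zero_add' ENNReal.summable, tsum_eq_zero_add' ENNReal.summable]
  simp only [show ∀ j, 2 * (j + 1 + 1 + 2) - 7 = 2 * j + 1 by omega, zero_add,
    show 2 * (1 + 2) - 7 = 0 from rfl, Nat.cast_zero, mul_zero]
  calc ∑' j, poissonPMF 1 (j + 3) * ((2 * j + 1 : ℕ) : ℝ≥0∞)
      ≤ ∑' j, 6⁻¹ * poissonPMF 1 j := by
        refine ENNReal.tsum_le_tsum fun j => ?_
        rw [← poissonPMF_one_add_three_mul j, mul_comm 6⁻¹, mul_assoc]
        gcongr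
        rw [← div_eq_mul_inv, ENNReal.le_div_iff_mul_le (by simp) (by simp)]
        exact_mod_cast (show (2 * j + 1) * 6 ≤ (j + 1) * (j + 2) * (j + 3) by
          nlinarith [Nat.zero_le (j * j * j), Nat.zero_le (j * j)])
    _ = 6⁻¹ := by rw [ENNReal.tsum_mul_left, PMF.tsum_coe, mul_one]

end ProbabilityTheory

namespace ENAS

open ProbabilityTheory

section Drift

variable {n : ℕ} {step : State → PMF State} {μ0 : PMF State}

theorem alive_eq_zero_of_fitness_eq_one {t : ℕ} {x : State} (h : fitness n x = 1) :
    alive n step μ0 t x = 0 := by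
  cases t <;> simp [alive, h]

theorem alive_zero_le (x : State) : alive n step μ0 0 x ≤ μ0 x := by
  rw [alive]; split_ifs <;> simp

theorem alive_succ_le (t : ℕ) (x : State) :
    alive n step μ0 (t + 1) x ≤ ∑' y, alive n step μ0 t y * step y x := by
  rw [alive]; split_ifs <;> simp

theorem mul_expectedRuntime_le_of_drift (V : State → ℝ≥0∞) {δ : ℝ≥0∞}
    (hdrift : ∀ x, fitness n x ≠ 1 → ∑' y, step x y * V y + δ ≤ V x) :
    δ * expectedRuntime n step μ0 ≤ ∑' x, μ0 x * V x := by
  set P : ℕ → ℝ≥0∞ := fun t => ∑' x, alive n step μ0 t x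
  set W : ℕ → ℝ≥0∞ := fun t => ∑' x, alive n step μ0 t x * V x
  have hstep : ∀ t, W (t + 1) + δ * P t ≤ W t := fun t => calc
    W (t + 1) + δ * P t
        ≤ ∑' x, (∑' y, alive n step μ0 t y * step y x) * V x + δ * P t := by
          gcongr
          exact ENNReal.tsum_le_tsum fun x => mul_le_mul_left (alive_succ_le t x) _
    _ = ∑' y, alive n step μ0 t y * ∑' x, step y x * V x + ∑' y, alive n step μ0 t y * δ := by
          simp_rw [P, ← ENNReal.tsum_mul_right, ← ENNReal.tsum_mul_left, mul_assoc, mul_comm δ]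
          rw [ENNReal.tsum_comm]
    _ = ∑' y, alive n step μ0 t y * (∑' x, step y x * V x + δ) := by
          rw [← ENNReal.tsum_add]; simp_rw [mul_add]
    _ ≤ W t := by
          refine ENNReal.tsum_le_tsum fun y => ?_
          by_cases hy : fitness n y = 1
          · simp [alive_eq_zero_of_fitness_eq_one hy]
          · exact mul_le_mul_right (hdrift y hy) _
  have htelescope : ∀ N, W N + δ * ∑ t ∈ Finset.range N, P t ≤ W 0 := by
    intro N
    induction N with
    | zero => simp
    | succ N ih => calc
        W (N + 1) + δ * ∑ t ∈ Finset.range (N + 1), P t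
            = (W (N + 1) + δ * P N) + δ * ∑ t ∈ Finset.range N, P t := by
              rw [Finset.sum_range_succ, mul_add]; ring
        _ ≤ W N + δ * ∑ t ∈ Finset.range N, P t := by gcongr; exact hstep N
        _ ≤ W 0 := ih
  calc δ * expectedRuntime n step μ0
      = ⨆ N, δ * ∑ t ∈ Finset.range N, P t := by
        rw [expectedRuntime, ENNReal.tsum_eq_iSup_nat, ENNReal.mul_iSup]
    _ ≤ W 0 := iSup_le fun N => le_add_self.trans (htelescope N)
    _ ≤ ∑' x, μ0 x * V x := ENNReal.tsum_le_tsum fun x => mul_le_mul_left (alive_zero_le x) _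

end Drift

/-- With `n = 4 q`: `iVal n x + iDeficit q x = 2 q`. -/
def iDeficit (q : ℕ) (x : State) : ℕ := (q - min x.2.1 q) + (q - min x.2.2 q)

/-- With `n = 4 q`: `jVal n x + jDeficit q x = 3 q`. -/
def jDeficit (q : ℕ) (x : State) : ℕ :=
  (2 * q - min x.1 (2 * q)) + (q - min x.2.1 q) + min (x.2.1 - q) (q - x.2.2)

/-- The weight `7` reflects `7 B ≤ A` (`seven_mul_coeffB_le_coeffA`): under elitist selection
one unit of `iDeficit` cannot be traded for fewer than seven units of `jDeficit`. -/
def potential (q : ℕ) (x : State) : ℕ := 7 * iDeficit q x + jDeficit q x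

noncomputable def coeffA (n : ℕ) : ℝ := (1 / 2) * Real.sin (2 * Real.pi / n)

noncomputable def coeffB (n : ℕ) : ℝ := Real.pi / n - coeffA n

theorem potential_le (q : ℕ) (x : State) : potential q x ≤ 18 * q := by
  simp only [potential, iDeficit, jDeficit]; omega

theorem fitness_four_mul {q : ℕ} (hq : q ≠ 0) (x : State) :
    fitness (4 * q) x = 1 -
      (iDeficit q x * coeffA (4 * q) + jDeficit q x * coeffB (4 * q)) / Real.pi := by
  have hi : (iVal (4 * q) x : ℝ) = 2 * q - iDeficit q x := by
    rw [eq_sub_iff_add_eq]; norm_cast; simp only [iVal, iDeficit]; omega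
  have hj : (jVal (4 * q) x : ℝ) = 3 * q - jDeficit q x := by
    rw [eq_sub_iff_add_eq]; norm_cast
    obtain ⟨a, b, c⟩ := x
    simp only [jVal, jDeficit]; push_cast; omega
  simp only [fitness, coeffA, coeffB, hi, hj]
  push_cast
  field_simp
  ring

theorem fitness_eq_one_of_potential_eq_zero {q : ℕ} (hq : q ≠ 0) {x : State}
    (hx : potential q x = 0) : fitness (4 * q) x = 1 := by
  have hi : iDeficit q x = 0 := by simp only [potential] at hx; omega
  have hj : jDeficit q x = 0 := by simp only [potential] at hx; omega
  simp [fitness_four_mul hq, hi, hj]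

theorem coeffB_pos {n : ℕ} (hn : n ≠ 0) : 0 < coeffB n := by
  have hx : 0 < 2 * Real.pi / n := by positivity
  have := Real.sin_lt hx
  simp only [coeffB, coeffA]
  linarith [show Real.pi / n = 2 * Real.pi / n / 2 by ring]

/-- Equivalent to `(7 / 8) θ ≤ sin θ` for `θ = 2π / n ≤ π / 4`, which follows from
`θ - θ³ / 6 ≤ sin θ`. -/
theorem seven_mul_coeffB_le_coeffA {n : ℕ} (hn : 8 ≤ n) : 7 * coeffB n ≤ coeffA n := by
  simp only [coeffB, coeffA]
  rw [show Real.pi / n = 2 * Real.pi / n / 2 by ring]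
  set θ := 2 * Real.pi / n
  have hθ : 0 < θ := by positivity
  have hθ' : θ ≤ 4 / 5 := by
    rw [div_le_iff₀ (by positivity)]
    nlinarith [Real.pi_lt_d2, show (8 : ℝ) ≤ n by exact_mod_cast hn]
  have hsq : θ ^ 2 ≤ 3 / 4 := by nlinarith
  have hcube : θ ^ 3 ≤ 3 / 4 * θ := by nlinarith [mul_le_mul_of_nonneg_left hsq hθ.le]
  linarith [Real.sin_ge_sub_cube hθ.le]

theorem fitness_le_fitness_iff {q : ℕ} (hq : q ≠ 0) {x z : State} :
    fitness (4 * q) x ≤ fitness (4 * q) z ↔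
      iDeficit q z * coeffA (4 * q) + jDeficit q z * coeffB (4 * q) ≤
        iDeficit q x * coeffA (4 * q) + jDeficit q x * coeffB (4 * q) := by
  rw [fitness_four_mul hq, fitness_four_mul hq, sub_le_sub_iff_left,
    div_le_div_iff_of_pos_right Real.pi_pos]

theorem fitness_le_of_deficits_le {q : ℕ} (hq : 2 ≤ q) {x y : State}
    (hi : iDeficit q y ≤ iDeficit q x) (hj : jDeficit q y ≤ jDeficit q x) :
    fitness (4 * q) x ≤ fitness (4 * q) y := by
  have hB := coeffB_pos (n := 4 * q) (by omega)
  have hA := seven_mul_coeffB_le_coeffA (n := 4 * q) (by omega)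
  rw [fitness_le_fitness_iff (by omega)]
  gcongr; linarith

theorem potential_le_of_fitness_le {q : ℕ} (hq : 2 ≤ q) {x z : State}
    (hacc : fitness (4 * q) x ≤ fitness (4 * q) z) (hi : iDeficit q x ≤ iDeficit q z) :
    potential q z ≤ potential q x := by
  have hB := coeffB_pos (n := 4 * q) (by omega)
  have hA := seven_mul_coeffB_le_coeffA (n := 4 * q) (by omega)
  rw [fitness_le_fitness_iff (by omega)] at hacc
  have hi' : (iDeficit q x : ℝ) ≤ iDeficit q z := by exact_mod_cast hi
  have hreal : 7 * ((iDeficit q z : ℝ) - iDeficit q x) ≤ jDeficit q x - jDeficit q z := by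
    refine le_of_mul_le_mul_right ?_ hB
    nlinarith
  have hint : 7 * ((iDeficit q z : ℤ) - iDeficit q x) ≤ jDeficit q x - jDeficit q z := by
    exact_mod_cast hreal
  simp only [potential]; omega

theorem deficits_applyAction_le (q : ℕ) (s : Fin 18) (x : State) :
    iDeficit q x ≤ iDeficit q (applyAction s x) + 1 ∧
      jDeficit q (applyAction s x) ≤ jDeficit q x + 2 := by
  obtain ⟨a, b, c⟩ := x
  fin_cases s <;> simp only [applyAction, iDeficit, jDeficit] <;> (try split_ifs) <;>
    (try dsimp only) <;> omega

theorem deficits_le_of_mem_support_mutateIter (q : ℕ) {m : ℕ} {x z : State}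
    (hz : z ∈ (mutateIter m x).support) :
    iDeficit q x ≤ iDeficit q z + m ∧ jDeficit q z ≤ jDeficit q x + 2 * m := by
  induction m generalizing x with
  | zero =>
    rw [mutateIter, PMF.mem_support_pure_iff] at hz
    subst hz; omega
  | succ m ih =>
    obtain ⟨y, hy, hz⟩ := (PMF.mem_support_bind_iff _ _ _).1 hz
    obtain ⟨s, -, rfl⟩ := (PMF.mem_support_map_iff _ _ _).1 hy
    have := deficits_applyAction_le q s x
    have := ih hz
    omega

/-- If `iDeficit` does not drop, `potential_le_of_fitness_le` applies; if it drops by `d ≥ 1`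
(so it was nonzero), the saving `7 d` offsets all but `2 m - 7` of the at most `2 m` added to
`jDeficit`. -/
theorem potential_select_le {q : ℕ} (hq : 2 ≤ q) {m : ℕ} {x z : State}
    (hz : z ∈ (mutateIter m x).support) :
    potential q (select (4 * q) x z) ≤
      potential q x + if iDeficit q x = 0 then 0 else 2 * m - 7 := by
  unfold select
  split_ifs with hacc hi
  · exact (potential_le_of_fitness_le hq hacc (by omega)).trans le_self_add
  · by_cases hle : iDeficit q x ≤ iDeficit q z
    · exact (potential_le_of_fitness_le hq hacc hle).trans le_self_add
    · have := deficits_le_of_mem_support_mutateIter q hz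
      simp only [potential]; omega
  all_goals exact le_self_add

def gain (q : ℕ) (x : State) : ℕ := if iDeficit q x = 0 then 1 else 7

/-- Each action has two seeds, so an improving action is drawn with probability `2 / 18`:
add a B block while `n_B < q`, else a C block while `n_C < q`, else an A block. -/
theorem exists_seeds_improving {q : ℕ} (hq : 2 ≤ q) {x : State} (hx : potential q x ≠ 0) :
    ∃ s₁ s₂ : Fin 18, s₁ ≠ s₂ ∧ applyAction s₁ x = applyAction s₂ x ∧
      fitness (4 * q) x ≤ fitness (4 * q) (applyAction s₁ x) ∧
      potential q (applyAction s₁ x) + gain q x ≤ potential q x := by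
  suffices ∃ (s₁ s₂ : Fin 18) (y : State), s₁ ≠ s₂ ∧ applyAction s₁ x = y ∧
      applyAction s₂ x = y ∧ iDeficit q y ≤ iDeficit q x ∧ jDeficit q y ≤ jDeficit q x ∧
      potential q y + gain q x ≤ potential q x by
    obtain ⟨s₁, s₂, y, hne, rfl, h₂, hi, hj, hV⟩ := this
    exact ⟨s₁, s₂, hne, h₂.symm, fitness_le_of_deficits_le hq hi hj, hV⟩
  obtain ⟨a, b, c⟩ := x
  simp only [potential, iDeficit, jDeficit] at hx
  by_cases hb : b < q
  · have hg : gain q (a, b, c) = 7 := if_neg (by simp only [iDeficit]; omega)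
    refine ⟨2, 3, (a, b + 1, c), by decide, rfl, rfl, ?_, ?_, ?_⟩ <;>
      simp only [hg, potential, iDeficit, jDeficit] <;> omega
  by_cases hc : c < q
  · have hg : gain q (a, b, c) = 7 := if_neg (by simp only [iDeficit]; omega)
    refine ⟨4, 5, (a, b, c + 1), by decide, rfl, rfl, ?_, ?_, ?_⟩ <;>
      simp only [hg, potential, iDeficit, jDeficit] <;> omega
  · have hg : gain q (a, b, c) = 1 := if_pos (by simp only [iDeficit]; omega)
    refine ⟨0, 1, (a + 1, b, c), by decide, rfl, rfl, ?_, ?_, ?_⟩ <;>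
      simp only [hg, potential, iDeficit, jDeficit] <;> omega

theorem mutateIter_one (x : State) : mutateIter 1 x = mutate x := PMF.bind_pure _

theorem applyAction_mem_support_mutate (s : Fin 18) (x : State) :
    applyAction s x ∈ (mutate x).support :=
  (PMF.mem_support_map_iff _ _ _).2 ⟨s, PMF.mem_support_uniformOfFintype s, rfl⟩

theorem tsum_mutate_mul (x : State) (g : State → ℝ≥0∞) :
    ∑' z, mutate x z * g z = (∑ s : Fin 18, g (applyAction s x)) / 18 := by
  rw [mutate, PMF.tsum_map_mul, tsum_fintype, div_eq_mul_inv, Finset.sum_mul]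
  simp [PMF.uniformOfFintype_apply, mul_comm]

theorem sum_potential_select_add_le {q : ℕ} (hq : 2 ≤ q) {x : State} (hx : potential q x ≠ 0) :
    ∑ s : Fin 18, potential q (select (4 * q) x (applyAction s x)) + 2 * gain q x ≤
      18 * potential q x := by
  obtain ⟨s₁, s₂, hne, heq, hacc, hV⟩ := exists_seeds_improving hq hx
  set f := fun s => potential q (select (4 * q) x (applyAction s x))
  have hf : ∀ s, f s ≤ potential q x := fun s => by
    have := potential_select_le hq (m := 1)
      (by rw [mutateIter_one]; exact applyAction_mem_support_mutate s x)
    split_ifs at this <;> omega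
  have hf₁ : f s₁ + gain q x ≤ potential q x := by simpa [f, select, hacc] using hV
  have hf₂ : f s₂ + gain q x ≤ potential q x := by simpa [f, select, ← heq, hacc] using hV
  calc ∑ s, f s + 2 * gain q x
      = ∑ s, (f s + (if s = s₁ then gain q x else 0) + (if s = s₂ then gain q x else 0)) := by
        simp only [Finset.sum_add_distrib, Finset.sum_ite_eq', Finset.mem_univ, if_true]; ring
    _ ≤ ∑ _s : Fin 18, potential q x := Finset.sum_le_sum fun s _ => by
        by_cases h₁ : s = s₁
        · subst h₁; simpa [hne] using hf₁
        · by_cases h₂ : s = s₂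
          · subst h₂; simpa [h₁] using hf₂
          · simpa [h₁, h₂] using hf s
    _ = 18 * potential q x := by simp

theorem tsum_stepMultiBit_mul_potential_add_le {q : ℕ} (hq : 2 ≤ q) {x : State}
    (hx : potential q x ≠ 0) :
    ∑' z, stepMultiBit (4 * q) x z * (potential q z : ℝ≥0∞) + 27⁻¹ ≤ potential q x := by
  rw [stepMultiBit, PMF.tsum_map_mul, mutateMulti, PMF.tsum_bind_mul]
  refine PMF.tsum_mul_add_le_of_succ (c := ((2 * gain q x : ℕ) : ℝ≥0∞) / 18)
    (r := fun k => ((if iDeficit q x = 0 then 0 else 2 * (k + 2) - 7 : ℕ) : ℝ≥0∞)) ?_ ?_ ?_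
  · rw [zero_add, mutateIter_one, tsum_mutate_mul, ← ENNReal.add_div,
      ENNReal.div_le_iff (by norm_num) (by norm_num)]
    exact_mod_cast (sum_potential_select_add_le hq hx).trans_eq (mul_comm _ _)
  · intro k
    refine PMF.tsum_mul_le_of_forall_mem_support fun z hz => ?_
    exact_mod_cast potential_select_le hq hz
  · have hP := one_third_le_poissonPMF_one_zero
    by_cases hd : iDeficit q x = 0
    · simp only [hd, gain, if_true, Nat.cast_zero, mul_zero, tsum_zero, zero_add]
      calc (27 : ℝ≥0∞)⁻¹ = 3⁻¹ * (((2 * 1 : ℕ) : ℝ≥0∞) / 18) := by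
            rw [← ENNReal.toReal_eq_toReal_iff' (by finiteness) (by finiteness)]
            simp [ENNReal.toReal_mul, ENNReal.toReal_div]; norm_num
        _ ≤ _ := by gcongr
    · simp only [hd, gain, if_false]
      calc ∑' k, poissonPMF 1 (k + 1) * ((2 * (k + 2) - 7 : ℕ) : ℝ≥0∞) + 27⁻¹
          ≤ 6⁻¹ + 27⁻¹ := by gcongr; exact tsum_poissonPMF_one_succ_mul_le
        _ ≤ 3⁻¹ * (((2 * 7 : ℕ) : ℝ≥0∞) / 18) := by
            rw [← ENNReal.toReal_le_toReal (by finiteness) (by finiteness)]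
            simp [ENNReal.toReal_add, ENNReal.toReal_mul, ENNReal.toReal_div]; norm_num
        _ ≤ _ := by gcongr

theorem expectedRuntime_stepMultiBit_le {q : ℕ} (hq : 2 ≤ q) (μ0 : PMF State) :
    expectedRuntime (4 * q) (stepMultiBit (4 * q)) μ0 ≤ 486 * q := by
  have hdrift := mul_expectedRuntime_le_of_drift (μ0 := μ0) (fun x => (potential q x : ℝ≥0∞))
    fun x hx => tsum_stepMultiBit_mul_potential_add_le hq
      fun h => hx (fitness_eq_one_of_potential_eq_zero (by omega) h)
  have hinit : ∑' x, μ0 x * (potential q x : ℝ≥0∞) ≤ 18 * q :=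
    PMF.tsum_mul_le_of_forall_mem_support fun x _ => by exact_mod_cast potential_le q x
  calc expectedRuntime (4 * q) (stepMultiBit (4 * q)) μ0
      = 27 * (27⁻¹ * expectedRuntime (4 * q) (stepMultiBit (4 * q)) μ0) := by
        rw [← mul_assoc, ENNReal.mul_inv_cancel (by norm_num) (by norm_num), one_mul]
    _ ≤ 27 * (18 * q) := mul_le_mul_right (hdrift.trans hinit) _
    _ = 486 * q := by ring

/-- there exists a constant `C > 0` such that for every integer
`n ≥ 8` divisible by `4`, the (1+1)-ENAS algorithm with multi-bit mutation and
initial bound `s = n/4` has expected runtime at most `C·n` on the UNIFORM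
problem. -/
theorem multibit_upper_bound :
    ∃ C : ℝ, 0 < C ∧ ∀ n : ℕ, 8 ≤ n → 4 ∣ n →
      expectedRuntime n (stepMultiBit n) (initDist (n / 4)) ≤
        ENNReal.ofReal (C * n) := by
  refine ⟨243 / 2, by norm_num, fun n hn ⟨q, hnq⟩ => ?_⟩
  subst hnq
  calc expectedRuntime (4 * q) (stepMultiBit (4 * q)) (initDist (4 * q / 4))
      ≤ 486 * q := expectedRuntime_stepMultiBit_le (by omega) _
    _ = ENNReal.ofReal (243 / 2 * ↑(4 * q)) := by
      rw [show (243 / 2 : ℝ) * ↑(4 * q) = ((486 * q : ℕ) : ℝ) by push_cast; ring,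
        ENNReal.ofReal_natCast]
      push_cast; rfl

end ENAS
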